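/- Let X ∈ R^{n×p} (n ≥ p) and U ∈ R^{n×p} with UᵀU = I_p. The following are equivalent: (i) U belongs to the convex subdifferential of the nuclear norm at X; (ii) ⟨U, X⟩ = ‖X‖_* (Frobenius inner product); (iii) XUᵀ is symmetric positive semidefinite. -/

import Mathlib

open Matrix

noncomputable def nuclearNorm {m n : Type*} [Fintype m] [Fintype n] [DecidableEq n]
    (A : Matrix m n ℝ) : ℝ :=
  ((Matrix.posSemidef_conjTranspose_mul_self A).1.eigenvectorUnitary.1 *
    diagonal ((RCLike.ofReal : ℝ → ℝ) ∘ (√·) ∘ (Matrix.posSemidef_conjTranspose_mul_self A).1.eigenvalues) *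
    (star (Matrix.posSemidef_conjTranspose_mul_self A).1.eigenvectorUnitary : Matrix n n ℝ)).trace

noncomputable def opNorm {m n : Type*} [Fintype m] [Fintype n] [DecidableEq m] [DecidableEq n]
    (A : Matrix m n ℝ) : ℝ :=
  ‖(LinearMap.toContinuousLinearMap
      (Matrix.toEuclideanLin A : EuclideanSpace ℝ n →ₗ[ℝ] EuclideanSpace ℝ m))‖

def finner {m n : Type*} [Fintype m] [Fintype n] (A B : Matrix m n ℝ) : ℝ :=
  (Aᵀ * B).trace

noncomputable def nuclearSubdiff {m n : Type*} [Fintype m] [Fintype n] [DecidableEq n]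
    (X : Matrix m n ℝ) : Set (Matrix m n ℝ) :=
  {Y | ∀ Z, nuclearNorm X + finner Y (Z - X) ≤ nuclearNorm Z}

def rectDiag (n p : ℕ) (s : Fin p → ℝ) : Matrix (Fin n) (Fin p) ℝ :=
  Matrix.of fun i j => if (i : ℕ) = (j : ℕ) then s j else 0

def blockIR (n p r : ℕ) (R : Matrix (Fin (n - r)) (Fin (p - r)) ℝ) :
    Matrix (Fin n) (Fin p) ℝ :=
  Matrix.of fun i j =>
    if h : (i : ℕ) < r ∨ (j : ℕ) < r then (if (i : ℕ) = (j : ℕ) then 1 else 0)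
    else R ⟨i - r, by have := i.isLt; omega⟩ ⟨j - r, by have := j.isLt; omega⟩

/-! With `S = √(XᵀX) = Q D Qᵀ` diagonalised, the columns `aᵢ` of `UQ` are unit vectors and the
columns `bᵢ` of `XQ` have length `dᵢ`, so Cauchy–Schwarz gives
`⟨U, X⟩ = ∑ ⟨aᵢ, bᵢ⟩ ≤ ∑ dᵢ = ‖X‖_*`, and likewise `⟨U, Z⟩ ≤ ‖Z‖_*` for every `Z`. Hence `U` is a
subgradient at `X` iff `⟨U, X⟩ = ‖X‖_*`. Equality forces `bᵢ = dᵢ aᵢ`, i.e. the polar decomposition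
`X = U S`, so `XUᵀ = U S Uᵀ` is positive semidefinite. Conversely, if `XUᵀ` is positive
semidefinite then `UᵀX` is a positive semidefinite square root of `XᵀX`, so `⟨U, X⟩ = tr √(XᵀX)`. -/

open scoped MatrixOrder

lemma nuclearNorm_eq_trace_sqrt {m n : Type*} [Fintype m] [Fintype n] [DecidableEq n]
    (A : Matrix m n ℝ) : nuclearNorm A = (CFC.sqrt (Aᵀ * A)).trace := by
  have hA := posSemidef_conjTranspose_mul_self A
  rw [← conjTranspose_eq_transpose_of_trivial, CFC.sqrt_eq_cfc,
    cfc_nnreal_eq_real _ (Aᴴ * A) hA.nonneg, hA.1.cfc_eq]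
  simp only [nuclearNorm, IsHermitian.cfc, Unitary.conjStarAlgAut_apply, Real.sqrt]

lemma finner_sub {m n : Type*} [Fintype m] [Fintype n] (A B C : Matrix m n ℝ) :
    finner A (B - C) = finner A B - finner A C := by
  simp only [finner, Matrix.mul_sub, trace_sub]

lemma nuclearNorm_zero {m n : Type*} [Fintype m] [Fintype n] [DecidableEq n] :
    nuclearNorm (0 : Matrix m n ℝ) = 0 := by
  rw [nuclearNorm_eq_trace_sqrt, transpose_zero, Matrix.zero_mul, CFC.sqrt_zero, trace_zero]

lemma mem_nuclearSubdiff_iff_of_forall_finner_le {m n : Type*} [Fintype m] [Fintype n]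
    [DecidableEq n] {X Y : Matrix m n ℝ} (hY : ∀ Z, finner Y Z ≤ nuclearNorm Z) :
    Y ∈ nuclearSubdiff X ↔ finner Y X = nuclearNorm X := by
  refine ⟨fun h => le_antisymm (hY X) ?_, fun h Z => ?_⟩
  · have h0 := h 0
    have hY0 : finner Y 0 = 0 := by simp only [finner, Matrix.mul_zero, trace_zero]
    rw [nuclearNorm_zero, finner_sub, hY0] at h0
    linarith
  · rw [finner_sub, h]
    linarith [hY Z]

section

variable {m p : Type*} [Fintype m] [Fintype p]

lemma dotProduct_le_of_dotProduct_self_eq {a b : m → ℝ} {d : ℝ} (ha : a ⬝ᵥ a = 1)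
    (hb : b ⬝ᵥ b = d ^ 2) (hd : 0 ≤ d) : a ⬝ᵥ b ≤ d := by
  have hcs := Finset.sum_mul_sq_le_sq_mul_sq Finset.univ a b
  simp only [sq, ← dotProduct.eq_1, ha, one_mul] at hcs
  exact (abs_le_of_sq_le_sq' (by rwa [sq, ← hb]) hd).2

-- Equality in Cauchy–Schwarz: `‖b - d • a‖² = 2d² - 2d (a ⬝ᵥ b) = 0`.
lemma eq_smul_of_dotProduct_eq {a b : m → ℝ} {d : ℝ} (ha : a ⬝ᵥ a = 1)
    (hb : b ⬝ᵥ b = d ^ 2) (hab : a ⬝ᵥ b = d) : b = d • a := by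
  have h : (b - d • a) ⬝ᵥ (b - d • a) = 0 := by
    simp only [sub_dotProduct, dotProduct_sub, smul_dotProduct, dotProduct_smul, ha, hb,
      dotProduct_comm b a, hab, smul_eq_mul]
    ring
  exact sub_eq_zero.mp (dotProduct_self_eq_zero.mp h)

lemma posSemidef_transpose_mul_self (X : Matrix m p ℝ) : (Xᵀ * X).PosSemidef :=
  posSemidef_conjTranspose_mul_self X

lemma Matrix.PosSemidef.exists_orthogonal_diagonal [DecidableEq p] {S : Matrix p p ℝ}
    (hS : S.PosSemidef) : ∃ (Q : Matrix p p ℝ) (d : p → ℝ),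
      Qᵀ * Q = 1 ∧ Q * Qᵀ = 1 ∧ 0 ≤ d ∧ S = Q * diagonal d * Qᵀ := by
  have hQ := hS.1.eigenvectorUnitary.2
  refine ⟨hS.1.eigenvectorUnitary, hS.1.eigenvalues, ?_, ?_, hS.eigenvalues_nonneg, ?_⟩
  · simpa [star_eq_conjTranspose] using Unitary.star_mul_self_of_mem hQ
  · simpa [star_eq_conjTranspose] using Unitary.mul_star_self_of_mem hQ
  · simpa [Unitary.conjStarAlgAut_apply, star_eq_conjTranspose] using hS.1.spectral_theorem

lemma transpose_mul_mul_transpose_mul (A B : Matrix m p ℝ) (Q : Matrix p p ℝ) :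
    (A * Q)ᵀ * (B * Q) = Qᵀ * (Aᵀ * B) * Q := by
  simp only [transpose_mul, Matrix.mul_assoc]

lemma trace_transpose_mul_mul_transpose_mul [DecidableEq p] (A B : Matrix m p ℝ)
    {Q : Matrix p p ℝ} (hQ : Q * Qᵀ = 1) : ((A * Q)ᵀ * (B * Q)).trace = (Aᵀ * B).trace := by
  rw [transpose_mul_mul_transpose_mul, trace_mul_cycle, hQ, Matrix.one_mul]

lemma transpose_mul_self_mul_eq_diagonal_sq [DecidableEq p] {X : Matrix m p ℝ}
    {Q : Matrix p p ℝ} {d : p → ℝ} (hQ : Qᵀ * Q = 1)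
    (hX : Xᵀ * X = Q * diagonal d * Qᵀ * (Q * diagonal d * Qᵀ)) :
    (X * Q)ᵀ * (X * Q) = diagonal (d ^ 2) := by
  rw [transpose_mul_mul_transpose_mul, hX]
  calc Qᵀ * (Q * diagonal d * Qᵀ * (Q * diagonal d * Qᵀ)) * Q
      = (Qᵀ * Q) * diagonal d * (Qᵀ * Q) * diagonal d * (Qᵀ * Q) := by
        simp only [Matrix.mul_assoc]
    _ = diagonal (d ^ 2) := by simp [hQ, diagonal_mul_diagonal, sq]

section Columns

variable [DecidableEq p] {A B : Matrix m p ℝ} {d : p → ℝ}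

omit [Fintype p] in
lemma diag_transpose_mul_le (hA : Aᵀ * A = 1) (hB : Bᵀ * B = diagonal (d ^ 2))
    (hd : 0 ≤ d) (i : p) : (Aᵀ * B) i i ≤ d i :=
  dotProduct_le_of_dotProduct_self_eq ((congrFun₂ hA i i).trans (one_apply_eq i))
    ((congrFun₂ hB i i).trans (diagonal_apply_eq _ i)) (hd i)

lemma trace_transpose_mul_le_sum (hA : Aᵀ * A = 1) (hB : Bᵀ * B = diagonal (d ^ 2))
    (hd : 0 ≤ d) : (Aᵀ * B).trace ≤ ∑ i, d i :=
  Finset.sum_le_sum fun i _ => diag_transpose_mul_le hA hB hd i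

lemma eq_mul_diagonal_of_trace_transpose_mul_eq (hA : Aᵀ * A = 1)
    (hB : Bᵀ * B = diagonal (d ^ 2)) (hd : 0 ≤ d) (h : (Aᵀ * B).trace = ∑ i, d i) :
    B = A * diagonal d := by
  have hdiag := (Finset.sum_eq_sum_iff_of_le fun i _ => diag_transpose_mul_le hA hB hd i).1 h
  have hcol : ∀ i, Bᵀ i = d i • Aᵀ i := fun i =>
    eq_smul_of_dotProduct_eq ((congrFun₂ hA i i).trans (one_apply_eq i))
      ((congrFun₂ hB i i).trans (diagonal_apply_eq _ i)) (hdiag i (Finset.mem_univ i))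
  ext k i
  simpa [mul_comm] using congrFun (hcol i) k

end Columns

variable [DecidableEq p] {X U : Matrix m p ℝ} {S : Matrix p p ℝ}

lemma trace_transpose_mul_le_trace (hU : Uᵀ * U = 1) (hS : S.PosSemidef)
    (hSX : Xᵀ * X = S * S) : (Uᵀ * X).trace ≤ S.trace := by
  obtain ⟨Q, d, hQ₁, hQ₂, hd, rfl⟩ := hS.exists_orthogonal_diagonal
  have hUQ : (U * Q)ᵀ * (U * Q) = 1 := by
    rw [transpose_mul_mul_transpose_mul, hU, Matrix.mul_one, hQ₁]
  calc (Uᵀ * X).trace = ((U * Q)ᵀ * (X * Q)).trace :=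
        (trace_transpose_mul_mul_transpose_mul U X hQ₂).symm
    _ ≤ ∑ i, d i :=
        trace_transpose_mul_le_sum hUQ (transpose_mul_self_mul_eq_diagonal_sq hQ₁ hSX) hd
    _ = (Q * diagonal d * Qᵀ).trace := by
        rw [trace_mul_cycle, hQ₁, Matrix.one_mul, trace_diagonal]

lemma eq_mul_of_trace_transpose_mul_eq (hU : Uᵀ * U = 1) (hS : S.PosSemidef)
    (hSX : Xᵀ * X = S * S) (h : (Uᵀ * X).trace = S.trace) : X = U * S := by
  obtain ⟨Q, d, hQ₁, hQ₂, hd, rfl⟩ := hS.exists_orthogonal_diagonal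
  have hUQ : (U * Q)ᵀ * (U * Q) = 1 := by
    rw [transpose_mul_mul_transpose_mul, hU, Matrix.mul_one, hQ₁]
  have hXQ : X * Q = U * Q * diagonal d := by
    refine eq_mul_diagonal_of_trace_transpose_mul_eq hUQ
      (transpose_mul_self_mul_eq_diagonal_sq hQ₁ hSX) hd ?_
    rw [trace_transpose_mul_mul_transpose_mul U X hQ₂, h, trace_mul_cycle, hQ₁,
      Matrix.one_mul, trace_diagonal]
  calc X = X * Q * Qᵀ := by rw [Matrix.mul_assoc, hQ₂, Matrix.mul_one]
    _ = U * (Q * diagonal d * Qᵀ) := by rw [hXQ]; simp only [Matrix.mul_assoc]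

lemma transpose_mul_self_eq_sqrt_mul_sqrt (X : Matrix m p ℝ) :
    Xᵀ * X = CFC.sqrt (Xᵀ * X) * CFC.sqrt (Xᵀ * X) :=
  (CFC.sqrt_mul_sqrt_self _ (posSemidef_transpose_mul_self X).nonneg).symm

lemma finner_le_nuclearNorm (hU : Uᵀ * U = 1) (X : Matrix m p ℝ) :
    finner U X ≤ nuclearNorm X := by
  rw [nuclearNorm_eq_trace_sqrt]
  exact trace_transpose_mul_le_trace hU (CFC.sqrt_nonneg _).posSemidef
    (transpose_mul_self_eq_sqrt_mul_sqrt X)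

lemma posSemidef_mul_transpose_of_finner_eq_nuclearNorm (hU : Uᵀ * U = 1)
    (h : finner U X = nuclearNorm X) : (X * Uᵀ).PosSemidef := by
  have hS := (CFC.sqrt_nonneg (Xᵀ * X)).posSemidef
  rw [nuclearNorm_eq_trace_sqrt] at h
  rw [eq_mul_of_trace_transpose_mul_eq hU hS (transpose_mul_self_eq_sqrt_mul_sqrt X) h]
  simpa only [conjTranspose_eq_transpose_of_trivial] using hS.mul_mul_conjTranspose_same U

lemma finner_eq_nuclearNorm_of_posSemidef (hU : Uᵀ * U = 1) (hXU : (X * Uᵀ).PosSemidef) :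
    finner U X = nuclearNorm X := by
  have hUX : U * Xᵀ = X * Uᵀ := by
    simpa only [IsHermitian, conjTranspose_eq_transpose_of_trivial, transpose_mul,
      transpose_transpose] using hXU.1
  have hpsd : (Uᵀ * X).PosSemidef := by
    simpa only [conjTranspose_eq_transpose_of_trivial, Matrix.mul_assoc, hU, Matrix.mul_one]
      using hXU.conjTranspose_mul_mul_same U
  have hsq : Uᵀ * X * (Uᵀ * X) = Xᵀ * X :=
    calc Uᵀ * X * (Uᵀ * X) = Uᵀ * (X * Uᵀ) * X := by simp only [Matrix.mul_assoc]
      _ = Uᵀ * U * (Xᵀ * X) := by rw [← hUX]; simp only [Matrix.mul_assoc]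
      _ = Xᵀ * X := by rw [hU, Matrix.one_mul]
  rw [nuclearNorm_eq_trace_sqrt, CFC.sqrt_unique hsq hpsd.nonneg]
  rfl

end

theorem polarization_tfae_general {n p : ℕ}
    (X U : Matrix (Fin n) (Fin p) ℝ) (hU : Uᵀ * U = 1) :
    (U ∈ nuclearSubdiff X ↔ finner U X = nuclearNorm X) ∧
    (finner U X = nuclearNorm X ↔ (X * Uᵀ).PosSemidef) :=
  ⟨mem_nuclearSubdiff_iff_of_forall_finner_le (finner_le_nuclearNorm hU),
    posSemidef_mul_transpose_of_finner_eq_nuclearNorm hU,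
    finner_eq_nuclearNorm_of_posSemidef hU⟩

theorem polarization_tfae {n p : ℕ} (hpn : p ≤ n)
    (X U : Matrix (Fin n) (Fin p) ℝ) (hU : Uᵀ * U = 1) :
    (U ∈ nuclearSubdiff X ↔ finner U X = nuclearNorm X) ∧
    (finner U X = nuclearNorm X ↔ (X * Uᵀ).PosSemidef) :=
  polarization_tfae_general X U hU
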